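/- arXiv:2303.06087 — 2 statements merged into one kernel-verified Lean document; each statement's English description precedes it below -/
import Mathlib

section
/- Let p be an odd prime, u a positive even integer, and λ₁, λ₂, m integers with gcd(λ₁λ₂, p) = 1. Write aⱼ = p^{u/2}·αⱼ + βⱼ with 1 ≤ αⱼ, βⱼ ≤ p^{u/2} and gcd(βⱼ, p) = 1 for j = 1,2. Then the congruence λ₁·a₁^{-1} − λ₂·a₂^{-1} ≡ m (mod p^u) holds if and only if both: (i) β₂^{-1} ≡ λ₁·λ₂^{-1}·β₁^{-1} − λ₂^{-1}·m (mod p^{u/2}), and (ii) α₂ ≡ λ₁·λ₂^{-1}·β₂²·β₁^{-2}·α₁ − g(β₁) (mod p^{u/2}), where g(β₁) = λ₂^{-1}·β₂²·(λ₁β₁^{-1} − λ₂β₂^{-1} − m)/p^{u/2} (this quotient being an integer whenever (i) holds). -/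
/-- the congruence `λ₁a₁⁻¹ − λ₂a₂⁻¹ ≡ m (mod p^u)` is equivalent to the pair
of congruences (i), (ii) modulo `p^(u/2)`, where inverses are realized by chosen integers
`b₁, b₂` (inverses of `a₁, a₂`), `c₁, c₂` (inverses of `β₁, β₂`) and `e₂` (inverse of `λ₂`),
and `g(β₁)` is realized as the exact quotient `g` with `p^(u/2)·(β₂²·e₂·g) = ...` pattern. -/
theorem stmt2 (p : ℕ) (hp : p.Prime) (hodd : p ≠ 2) (u : ℕ) (hu : 0 < u) (heu : Even u)
    (l₁ l₂ m : ℤ) (hl : Int.gcd (l₁ * l₂) p = 1)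
    (α₁ α₂ β₁ β₂ : ℤ)
    (hα₁ : 1 ≤ α₁ ∧ α₁ ≤ (p : ℤ) ^ (u / 2)) (hβ₁ : 1 ≤ β₁ ∧ β₁ ≤ (p : ℤ) ^ (u / 2))
    (hα₂ : 1 ≤ α₂ ∧ α₂ ≤ (p : ℤ) ^ (u / 2)) (hβ₂ : 1 ≤ β₂ ∧ β₂ ≤ (p : ℤ) ^ (u / 2))
    (hcop₁ : Int.gcd β₁ p = 1) (hcop₂ : Int.gcd β₂ p = 1)
    (a₁ a₂ : ℤ)
    (ha₁ : a₁ = (p : ℤ) ^ (u / 2) * α₁ + β₁) (ha₂ : a₂ = (p : ℤ) ^ (u / 2) * α₂ + β₂)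
    (b₁ b₂ c₁ c₂ e₂ : ℤ)
    (hb₁ : a₁ * b₁ ≡ 1 [ZMOD (p : ℤ) ^ u]) (hb₂ : a₂ * b₂ ≡ 1 [ZMOD (p : ℤ) ^ u])
    (hc₁ : β₁ * c₁ ≡ 1 [ZMOD (p : ℤ) ^ u]) (hc₂ : β₂ * c₂ ≡ 1 [ZMOD (p : ℤ) ^ u])
    (he₂ : l₂ * e₂ ≡ 1 [ZMOD (p : ℤ) ^ u]) :
    (l₁ * b₁ - l₂ * b₂ ≡ m [ZMOD (p : ℤ) ^ u]) ↔
      ((c₂ ≡ l₁ * e₂ * c₁ - e₂ * m [ZMOD (p : ℤ) ^ (u / 2)]) ∧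
        ∀ t : ℤ, (p : ℤ) ^ (u / 2) * t = l₁ * c₁ - l₂ * c₂ - m →
          α₂ ≡ l₁ * e₂ * β₂ ^ 2 * c₁ ^ 2 * α₁ - e₂ * β₂ ^ 2 * t
            [ZMOD (p : ℤ) ^ (u / 2)]) := by
  have hu2 : u / 2 + u / 2 = u := by
    obtain ⟨v, hv⟩ := heu; omega
  have hpu : (p : ℤ) ^ u = (p : ℤ) ^ (u / 2) * (p : ℤ) ^ (u / 2) := by
    rw [← pow_add, hu2]
  have hqpos : (0 : ℤ) < (p : ℤ) ^ (u / 2) := pow_pos (by exact_mod_cast hp.pos) _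
  generalize hqdef : ((p : ℤ) ^ (u / 2)) = q at *
  have hqne : q ≠ 0 := ne_of_gt hqpos
  rw [hpu] at hb₁ hb₂ hc₁ hc₂ he₂
  rw [hpu]
  -- mod-q versions
  have hqd : q ∣ q * q := dvd_mul_right q q
  have hc₂q : β₂ * c₂ ≡ 1 [ZMOD q] := hc₂.of_dvd hqd
  have he₂q : l₂ * e₂ ≡ 1 [ZMOD q] := he₂.of_dvd hqd
  obtain ⟨w, hw⟩ : q ∣ 1 - l₂ * e₂ := (Int.modEq_iff_dvd.mp he₂q)
  obtain ⟨n, hn⟩ : q ∣ 1 - β₂ * c₂ := (Int.modEq_iff_dvd.mp hc₂q)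
  -- b_j ≡ c_j - q α_j c_j² (mod q²)
  have key : ∀ a α β b c : ℤ, a = q * α + β →
      a * b ≡ 1 [ZMOD q * q] → β * c ≡ 1 [ZMOD q * q] →
      b ≡ c - q * α * c ^ 2 [ZMOD q * q] := by
    intro a α β b c ha hab hbc
    have h1 : a * (c - q * α * c ^ 2) ≡ 1 [ZMOD q * q] := by
      obtain ⟨k, hk⟩ : q * q ∣ 1 - β * c := Int.modEq_iff_dvd.mp hbc
      rw [Int.modEq_iff_dvd]
      exact ⟨k * (1 - q * α * c) + α ^ 2 * c ^ 2,
        by rw [ha]; linear_combination (1 - q * α * c) * hk⟩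
    calc b = b * 1 := by ring
      _ ≡ b * (a * (c - q * α * c ^ 2)) [ZMOD q * q] := h1.symm.mul_left b
      _ = (a * b) * (c - q * α * c ^ 2) := by ring
      _ ≡ 1 * (c - q * α * c ^ 2) [ZMOD q * q] := hab.mul_right _
      _ = c - q * α * c ^ 2 := one_mul _
  have hb₁x := key a₁ α₁ β₁ b₁ c₁ ha₁ hb₁ hc₁
  have hb₂x := key a₂ α₂ β₂ b₂ c₂ ha₂ hb₂ hc₂
  have hLR : l₁ * b₁ - l₂ * b₂ ≡
      l₁ * (c₁ - q * α₁ * c₁ ^ 2) - l₂ * (c₂ - q * α₂ * c₂ ^ 2) [ZMOD q * q] :=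
    (hb₁x.mul_left l₁).sub (hb₂x.mul_left l₂)
  constructor
  · intro h
    have hD : q * q ∣ q * (l₁ * α₁ * c₁ ^ 2 - l₂ * α₂ * c₂ ^ 2) -
        (l₁ * c₁ - l₂ * c₂ - m) := by
      have := Int.modEq_iff_dvd.mp (hLR.symm.trans h)
      obtain ⟨k, hk⟩ := this
      exact ⟨k, by linear_combination hk⟩
    constructor
    · -- (i)
      have hDq : q ∣ (l₁ * c₁ - l₂ * c₂ - m) := by
        obtain ⟨k, hk⟩ := hD
        exact ⟨l₁ * α₁ * c₁ ^ 2 - l₂ * α₂ * c₂ ^ 2 - q * k, by linear_combination -hk⟩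
      obtain ⟨d, hd⟩ := hDq
      rw [Int.modEq_iff_dvd]
      exact ⟨e₂ * d - c₂ * w, by linear_combination e₂ * hd - c₂ * hw⟩
    · -- (ii)
      intro t ht
      obtain ⟨k, hk⟩ := hD
      have hst : q ∣ (l₁ * α₁ * c₁ ^ 2 - l₂ * α₂ * c₂ ^ 2) - t := by
        have h2 : q * ((l₁ * α₁ * c₁ ^ 2 - l₂ * α₂ * c₂ ^ 2) - t) = q * (q * k) := by
          linear_combination hk - ht
        exact ⟨k, mul_left_cancel₀ hqne h2⟩
      obtain ⟨s, hs⟩ := hst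
      rw [Int.modEq_iff_dvd]
      exact ⟨e₂ * β₂ ^ 2 * s - α₂ * (β₂ * c₂) ^ 2 * w - α₂ * (β₂ * c₂ + 1) * n,
        by linear_combination (e₂ * β₂ ^ 2) * hs - (α₂ * (β₂ * c₂) ^ 2) * hw
          - (α₂ * (β₂ * c₂ + 1)) * hn⟩
  · rintro ⟨h1, h2⟩
    obtain ⟨d', hd'⟩ := Int.modEq_iff_dvd.mp h1
    have hDq : q ∣ (l₁ * c₁ - l₂ * c₂ - m) :=
      ⟨l₂ * d' + (l₁ * c₁ - m) * w, by linear_combination l₂ * hd' + (l₁ * c₁ - m) * hw⟩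
    obtain ⟨t, htq⟩ := hDq
    obtain ⟨r, hr⟩ := Int.modEq_iff_dvd.mp (h2 t htq.symm)
    have hst : (l₁ * α₁ * c₁ ^ 2 - l₂ * α₂ * c₂ ^ 2) - t =
        q * (l₂ * c₂ ^ 2 * r + (l₁ * c₁ ^ 2 * α₁ - t) * (w * (β₂ * c₂) ^ 2 + n * (1 + β₂ * c₂))) := by
      linear_combination l₂ * c₂ ^ 2 * hr + ((l₁ * c₁ ^ 2 * α₁ - t) * (β₂ * c₂) ^ 2) * hw
        + ((l₁ * c₁ ^ 2 * α₁ - t) * (1 + β₂ * c₂)) * hn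
    refine hLR.trans ?_
    rw [Int.modEq_iff_dvd]
    exact ⟨l₂ * c₂ ^ 2 * r + (l₁ * c₁ ^ 2 * α₁ - t) * (w * (β₂ * c₂) ^ 2 + n * (1 + β₂ * c₂)),
      by linear_combination q * hst - htq⟩
end

section
/- Let d be a positive integer, a an integer with gcd(a, d) = 1, and r | d. Define K_{r,d}(m) = (1/d)·Σ*_{α mod d} e(−aα/d)·S(±m, α^{-1}; d/r), where S denotes the Kloosterman sum and Σ* is over α coprime to d. Write d = d₀·d₁ with d₀ squarefree, d₁ squarefull, gcd(d₀, d₁) = 1. Then K_{r,d}(m) = 0 unless r | d₀, in which case K_{r,d}(m) = (μ(r)/d)·Σ*_{α mod d/r} e(−\overline{r}·a·α/(d/r))·S(±m, α^{-1}; d/r), where \overline{r} is an inverse of r modulo d/r. -/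
/-
Write `d = c r`; the Kloosterman factor `S(±m, α⁻¹; c)` only depends on `α mod c`.
If `r ∤ d₀`, some prime `p ∣ r` has `p² ∣ d`. Then `α ↦ α + d/p` permutes the units mod `d`
(as `(d/p)² ≡ 0`), fixes `α mod c` and multiplies `e(-aα/d)` by `e(-a/p) ≠ 1`, so the sum
vanishes. If `r ∣ d₀`, then `r` is squarefree and `r r̄ + c c̄ = 1` gives
`e(x/d) = e(r̄x/c) e(c̄x/r)`; by the Chinese remainder theorem the sum over `α mod d` factors
into the claimed sum mod `c` times the Ramanujan sum `Σ*_{w mod r} e(-a c̄ w/r)`, which is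
multiplicative in `r`, equals `-1` at primes, and hence equals `μ(r)`.
-/

open Finset

/-- The Kloosterman sum `S(m, n; q)`, realized as a sum over pairs `(x, y)` with
`x·y ≡ 1 (mod q)`. -/
noncomputable def kloosterman (m n : ℤ) (q : ℕ) : ℂ :=
  ∑ x ∈ (Finset.range q ×ˢ Finset.range q).filter (fun x => x.1 * x.2 % q = 1 % q),
    Complex.exp (2 * Real.pi * Complex.I * (((m : ℂ) * x.1 + (n : ℂ) * x.2) / q))

/-- `K_{r,d}(m) = (1/d)·Σ*_{α mod d} e(−aα/d)·S(εm, α⁻¹; d/r)`, realized as a sum over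
pairs `(α, β)` with `α·β ≡ 1 (mod d)` (so `β = α⁻¹`). -/
noncomputable def Krd (a m ε : ℤ) (r d : ℕ) : ℂ :=
  (1 / d) *
    ∑ ab ∈ (Finset.range d ×ˢ Finset.range d).filter (fun ab => ab.1 * ab.2 % d = 1 % d),
      Complex.exp (2 * Real.pi * Complex.I * (-((a : ℂ) * ab.1) / d)) *
        kloosterman (ε * m) ab.2 (d / r)

open ZMod Complex Real

theorem sum_filter_mul_mod_eq_one_eq_sum_units {M : Type*} [AddCommMonoid M] (q : ℕ) [NeZero q]
    (f : ℕ → ℕ → M) :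
    ∑ ab ∈ (range q ×ˢ range q).filter (fun ab => ab.1 * ab.2 % q = 1 % q), f ab.1 ab.2 =
      ∑ u : (ZMod q)ˣ, f (u : ZMod q).val (↑u⁻¹ : ZMod q).val := by
  symm
  refine Finset.sum_bij' (fun u _ => ((u : ZMod q).val, (↑u⁻¹ : ZMod q).val))
    (fun ab h => Units.mkOfMulEqOne (ab.1 : ZMod q) ab.2 ?_) ?_ ?_ ?_ ?_ (fun _ _ => rfl)
  · simp only [mem_filter] at h
    exact_mod_cast (ZMod.natCast_eq_natCast_iff' _ _ q).mpr h.2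
  · intro u _
    simp only [mem_filter, mem_product, mem_range, ZMod.val_lt, true_and]
    rw [← ZMod.val_mul, Units.mul_inv, ZMod.val_one_eq_one_mod]
  · exact fun _ _ => mem_univ _
  · intro u _
    ext
    simp
  · intro ab h
    simp only [mem_filter, mem_product, mem_range] at h
    simp [Units.mkOfMulEqOne, ZMod.val_cast_of_lt h.1.1, ZMod.val_cast_of_lt h.1.2]

noncomputable def kloostermanMod (m : ℤ) (q : ℕ) [NeZero q] (y : ZMod q) : ℂ :=
  ∑ u : (ZMod q)ˣ, stdAddChar ((m : ZMod q) * (u : ZMod q) + y * (↑u⁻¹ : ZMod q))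

theorem kloosterman_eq_kloostermanMod (m n : ℤ) (q : ℕ) [NeZero q] :
    kloosterman m n q = kloostermanMod m q n := by
  rw [kloosterman, sum_filter_mul_mod_eq_one_eq_sum_units q
    (fun x y => exp (2 * π * I * ((m * x + n * y) / q)))]
  refine Fintype.sum_congr _ _ fun u => ?_
  have := stdAddChar_coe (N := q) (m * (u : ZMod q).val + n * (↑u⁻¹ : ZMod q).val)
  push_cast [ZMod.natCast_zmod_val] at this
  rw [this]
  ring_nf

theorem sum_filter_exp_mul_kloosterman {q c : ℕ} [NeZero q] [NeZero c] (hc : c ∣ q) (b m : ℤ) :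
    ∑ ab ∈ (range q ×ˢ range q).filter (fun ab => ab.1 * ab.2 % q = 1 % q),
        exp (2 * π * I * (-((b : ℂ) * ab.1) / q)) * kloosterman m ab.2 c =
      ∑ u : (ZMod q)ˣ, stdAddChar (((-b : ℤ) : ZMod q) * (u : ZMod q)) *
        kloostermanMod m c ↑(unitsMap hc u)⁻¹ := by
  rw [sum_filter_mul_mod_eq_one_eq_sum_units q
    (fun x y => exp (2 * π * I * (-((b : ℂ) * x) / q)) * kloosterman m y c)]
  refine Fintype.sum_congr _ _ fun u => ?_
  have := stdAddChar_coe (N := q) (-b * (u : ZMod q).val)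
  push_cast [ZMod.natCast_zmod_val] at this
  rw [Int.cast_neg, this, kloosterman_eq_kloostermanMod]
  congr 2
  · ring_nf
  · rw [← map_inv, ZMod.unitsMap_val]
    simp [ZMod.natCast_val]

theorem Krd_eq_sum_units (a m ε : ℤ) (c r : ℕ) [NeZero c] [NeZero r] :
    Krd a m ε r (c * r) = 1 / ((c * r : ℕ) : ℂ) * ∑ u : (ZMod (c * r))ˣ,
      stdAddChar (((-a : ℤ) : ZMod (c * r)) * (u : ZMod (c * r))) *
        kloostermanMod (ε * m) c ↑(unitsMap (dvd_mul_right c r) u)⁻¹ := by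
  rw [Krd, Nat.mul_div_cancel c (NeZero.pos r), sum_filter_exp_mul_kloosterman]

theorem stdAddChar_intCast_mul_natCast (k p : ℕ) [NeZero k] [NeZero p] (b : ℤ) :
    stdAddChar ((b : ZMod (k * p)) * (k : ZMod (k * p))) = stdAddChar (b : ZMod p) := by
  have := stdAddChar_coe (N := k * p) (b * k)
  push_cast at this
  rw [this, stdAddChar_coe]
  congr 1
  have : (k : ℂ) ≠ 0 := Nat.cast_ne_zero.mpr (NeZero.ne k)
  field_simp

theorem AddChar.sum_units_mul_eq_zero_of_invariant {R M : Type*} [CommRing R] [Fintype Rˣ]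
    [CommRing M] [IsDomain M] (ψ : AddChar R M) {n : R} (hn : n * n = 0) (hψ : ψ n ≠ 1)
    (F : Rˣ → M) (hF : ∀ u v : Rˣ, (v : R) = u + n → F v = F u) :
    ∑ u : Rˣ, ψ u * F u = 0 := by
  have hnil : IsNilpotent n := ⟨2, by rw [pow_two, hn]⟩
  let shift : Rˣ → Rˣ := fun u => (hnil.isUnit_add_left_of_commute u.isUnit (Commute.all _ _)).unit
  have hshift (u : Rˣ) : (shift u : R) = u + n := by simp [shift, add_comm]
  have hbij : Function.Bijective shift :=
    Finite.injective_iff_bijective.mp fun u v huv => Units.ext <| by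
      simpa [hshift] using congrArg Units.val huv
  have hsum : ∑ u : Rˣ, ψ u * F u = ψ n * ∑ u : Rˣ, ψ u * F u := by
    rw [Finset.mul_sum]
    refine (Fintype.sum_bijective shift hbij _ _ fun u => ?_).symm
    rw [hshift, AddChar.map_add_eq_mul, hF u _ (hshift u)]
    ring
  have : (ψ n - 1) * ∑ u : Rˣ, ψ u * F u = 0 := by rw [sub_mul, ← hsum]; ring
  exact (mul_eq_zero.mp this).resolve_left (sub_ne_zero.mpr hψ)

theorem sum_units_stdAddChar_mul_eq_zero {d k p : ℕ} [NeZero d] (hkp : k * p = d) (hpk : p ∣ k)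
    {b : ℤ} (hb : ¬ (p : ℤ) ∣ b) (F : (ZMod d)ˣ → ℂ)
    (hF : ∀ u v : (ZMod d)ˣ, (v : ZMod d) = u + k → F v = F u) :
    ∑ u : (ZMod d)ˣ, stdAddChar ((b : ZMod d) * (u : ZMod d)) * F u = 0 := by
  subst hkp
  have : NeZero k := ⟨left_ne_zero_of_mul (NeZero.ne (k * p))⟩
  have : NeZero p := ⟨right_ne_zero_of_mul (NeZero.ne (k * p))⟩
  refine (stdAddChar.mulShift (b : ZMod (k * p))).sum_units_mul_eq_zero_of_invariant ?_ ?_ F hF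
  · exact_mod_cast (ZMod.natCast_eq_zero_iff _ _).mpr (mul_dvd_mul_left k hpk)
  · rw [AddChar.mulShift_apply, stdAddChar_intCast_mul_natCast]
    intro h
    apply hb
    rw [← ZMod.intCast_zmod_eq_zero_iff_dvd]
    exact injective_stdAddChar (h.trans (AddChar.map_zero_eq_one _).symm)

theorem sum_units_stdAddChar_mul_unitsMap_eq_zero {c r p : ℕ} [NeZero c] [NeZero r]
    (hpr : p ∣ r) (hp2 : p ^ 2 ∣ c * r) {b : ℤ} (hb : ¬ (p : ℤ) ∣ b) (f : (ZMod c)ˣ → ℂ) :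
    ∑ u : (ZMod (c * r))ˣ,
      stdAddChar ((b : ZMod (c * r)) * (u : ZMod (c * r))) * f (unitsMap (dvd_mul_right c r) u) =
      0 := by
  obtain ⟨s, rfl⟩ := hpr
  refine sum_units_stdAddChar_mul_eq_zero (k := c * s) (by ring) ?_ hb _ fun u v huv => ?_
  · rw [pow_two, mul_left_comm] at hp2
    exact Nat.dvd_of_mul_dvd_mul_left (Nat.pos_of_dvd_of_pos (dvd_mul_right p s)
      (NeZero.pos _)) hp2
  · congr 1
    ext
    rw [ZMod.unitsMap_val, ZMod.unitsMap_val, huv, ZMod.cast_add (dvd_mul_right c _),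
      ZMod.cast_natCast (dvd_mul_right c _), (ZMod.natCast_eq_zero_iff _ c).mpr (dvd_mul_right c s),
      add_zero]

theorem stdAddChar_eq_mul_of_bezout {c r : ℕ} [NeZero c] [NeZero r] {rb cb : ℤ}
    (h : r * rb + c * cb = 1) (x : ZMod (c * r)) :
    stdAddChar x = stdAddChar ((rb : ZMod c) * cast x) * stdAddChar ((cb : ZMod r) * cast x) := by
  rw [← ZMod.intCast_zmod_cast x]
  generalize (cast x : ℤ) = k
  rw [ZMod.cast_intCast (dvd_mul_right c r), ZMod.cast_intCast (dvd_mul_left r c)]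
  simp only [← Int.cast_mul, stdAddChar_coe, ← Complex.exp_add]
  congr 1
  have hc : (c : ℂ) ≠ 0 := Nat.cast_ne_zero.mpr (NeZero.ne c)
  have hr : (r : ℂ) ≠ 0 := Nat.cast_ne_zero.mpr (NeZero.ne r)
  have h' : (r : ℂ) * rb + c * cb = 1 := by exact_mod_cast h
  push_cast
  field_simp
  rw [h', mul_one]

noncomputable def ramanujanSum (r : ℕ) [NeZero r] (b : ℤ) : ℂ :=
  ∑ u : (ZMod r)ˣ, stdAddChar ((b : ZMod r) * (u : ZMod r))

theorem sum_units_stdAddChar_mul_eq_mul_ramanujanSum {c r : ℕ} [NeZero c] [NeZero r] {rb cb : ℤ}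
    (h : r * rb + c * cb = 1) (b : ℤ) (f : (ZMod c)ˣ → ℂ) :
    ∑ u : (ZMod (c * r))ˣ,
        stdAddChar ((b : ZMod (c * r)) * (u : ZMod (c * r))) * f (unitsMap (dvd_mul_right c r) u) =
      (∑ v : (ZMod c)ˣ, stdAddChar (((rb * b : ℤ) : ZMod c) * (v : ZMod c)) * f v) *
        ramanujanSum r (cb * b) := by
  have hcop : c.Coprime r := Nat.isCoprime_iff_coprime.mp ⟨cb, rb, by linarith⟩
  let e : (ZMod (c * r))ˣ ≃* (ZMod c)ˣ × (ZMod r)ˣ :=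
    (Units.mapEquiv (ZMod.chineseRemainder hcop).toMulEquiv).trans MulEquiv.prodUnits
  have he₁ (u : (ZMod (c * r))ˣ) : (e u).1 = unitsMap (dvd_mul_right c r) u :=
    Units.ext (Prod.fst_zmod_cast _)
  have he₂ (u : (ZMod (c * r))ˣ) : ((e u).2 : ZMod r) = cast (u : ZMod (c * r)) :=
    Prod.snd_zmod_cast _
  rw [ramanujanSum, Fintype.sum_mul_sum, ← Fintype.sum_prod_type']
  refine Fintype.sum_equiv e.toEquiv _ _ fun u => ?_
  rw [MulEquiv.toEquiv_eq_coe, MulEquiv.coe_toEquiv, stdAddChar_eq_mul_of_bezout h, he₁, he₂,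
    ZMod.unitsMap_val]
  push_cast [ZMod.cast_mul (dvd_mul_right c r), ZMod.cast_mul (dvd_mul_left r c),
    ZMod.cast_intCast (dvd_mul_right c r), ZMod.cast_intCast (dvd_mul_left r c)]
  ring_nf

theorem ramanujanSum_mul {c r : ℕ} [NeZero c] [NeZero r] {rb cb : ℤ} (h : r * rb + c * cb = 1)
    (b : ℤ) : ramanujanSum (c * r) b = ramanujanSum c (rb * b) * ramanujanSum r (cb * b) := by
  have := sum_units_stdAddChar_mul_eq_mul_ramanujanSum h b fun _ => 1
  simp only [mul_one] at this
  exact this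

theorem ramanujanSum_prime {p : ℕ} [Fact p.Prime] {b : ℤ} (hb : ¬ (p : ℤ) ∣ b) :
    ramanujanSum p b = -1 := by
  have hb₀ : (b : ZMod p) ≠ 0 := mt (ZMod.intCast_zmod_eq_zero_iff_dvd b p).mp hb
  have hall : ∑ x : ZMod p, stdAddChar.mulShift (b : ZMod p) x = 0 :=
    AddChar.sum_eq_zero_of_ne_one (isPrimitive_stdAddChar p hb₀)
  rw [Fintype.sum_eq_add_sum_subtype_ne _ 0,
    ← Fintype.sum_equiv unitsEquivNeZero (fun u => stdAddChar.mulShift (b : ZMod p) u) _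
      fun _ => rfl] at hall
  simp only [AddChar.mulShift_apply, AddChar.map_zero_eq_one] at hall
  rw [ramanujanSum]
  linear_combination hall

theorem ramanujanSum_eq_moebius {r : ℕ} [NeZero r] (hr : Squarefree r) {b : ℤ}
    (hb : IsCoprime b r) : ramanujanSum r b = (ArithmeticFunction.moebius r : ℂ) := by
  revert ‹NeZero r›
  induction r using Nat.recOnPrimeCoprime generalizing b with
  | zero => exact absurd rfl hr.ne_zero
  | prime_pow p n hp =>
    intro _
    rcases n with _ | _ | n
    · simp only [pow_zero] at *
      simp [ramanujanSum, Subsingleton.elim _ (0 : ZMod 1)]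
    · have : Fact p.Prime := ⟨hp⟩
      simp only [zero_add, pow_one] at hb ⊢
      have hpb : ¬ (p : ℤ) ∣ b := fun h =>
        (Nat.prime_iff_prime_int.mp hp).not_isUnit (hb.isUnit_of_dvd' h dvd_rfl)
      simp [ramanujanSum_prime hpb, ArithmeticFunction.moebius_apply_prime hp]
    · exact absurd ((Nat.squarefree_pow_iff hp.ne_one (by omega)).mp hr).2 (by omega)
  | coprime m n hm hn hmn ihm ihn =>
    intro _
    have : NeZero m := ⟨by omega⟩
    have : NeZero n := ⟨by omega⟩
    obtain ⟨cb, rb, h⟩ := Nat.isCoprime_iff_coprime.mpr hmn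
    obtain ⟨-, hm_sq, hn_sq⟩ := Nat.squarefree_mul_iff.mp hr
    push_cast at hb
    rw [ramanujanSum_mul (rb := rb) (cb := cb) (by linarith),
      ihm hm_sq (IsCoprime.mul_left ⟨n, cb, by linarith⟩ hb.of_mul_right_left),
      ihn hn_sq (IsCoprime.mul_left ⟨m, rb, by linarith⟩ hb.of_mul_right_right),
      ArithmeticFunction.isMultiplicative_moebius.map_mul_of_coprime hmn]
    push_cast
    ring

theorem exists_prime_dvd_sq_dvd_of_not_dvd {d r d₀ d₁ : ℕ} (hsplit : d = d₀ * d₁)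
    (hfull : ∀ q : ℕ, q.Prime → q ∣ d₁ → q ^ 2 ∣ d₁) (hr : r ∣ d) (hrd : ¬ r ∣ d₀) :
    ∃ p, p.Prime ∧ p ∣ r ∧ p ^ 2 ∣ d := by
  contrapose! hrd
  have hrd₁ : r.Coprime d₁ := Nat.coprime_of_dvd fun p hp hpr hpd₁ =>
    hrd p hp hpr ((hfull p hp hpd₁).trans (hsplit ▸ dvd_mul_left d₁ d₀))
  exact hrd₁.dvd_of_dvd_mul_right (hsplit ▸ hr)

theorem stmt16_general (a m ε : ℤ) (d r d₀ d₁ : ℕ) (hd : 0 < d)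
    (ha : Int.gcd a d = 1) (hr : r ∣ d)
    (hsplit : d = d₀ * d₁) (hsf : Squarefree d₀)
    (hfull : ∀ q : ℕ, q.Prime → q ∣ d₁ → q ^ 2 ∣ d₁) :
    (¬ r ∣ d₀ → Krd a m ε r d = 0) ∧
    (r ∣ d₀ → ∀ rb : ℤ, (r : ℤ) * rb ≡ 1 [ZMOD ((d / r : ℕ) : ℤ)] →
      Krd a m ε r d =
        (((ArithmeticFunction.moebius r : ℤ) : ℂ) / d) *
          ∑ ab ∈ (Finset.range (d / r) ×ˢ Finset.range (d / r)).filter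
              (fun ab => ab.1 * ab.2 % (d / r) = 1 % (d / r)),
            Complex.exp (2 * Real.pi * Complex.I *
                (-((rb : ℂ) * a * ab.1) / ((d / r : ℕ) : ℂ))) *
              kloosterman (ε * m) ab.2 (d / r)) := by
  obtain ⟨c, rfl⟩ := hr
  have : NeZero r := ⟨left_ne_zero_of_mul hd.ne'⟩
  have : NeZero c := ⟨right_ne_zero_of_mul hd.ne'⟩
  have ha' : IsCoprime a ((c : ℤ) * r) := by
    rw [Int.isCoprime_iff_gcd_eq_one, mul_comm, ← Nat.cast_mul, ha]
  rw [mul_comm r c] at hsplit ⊢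
  rw [Nat.mul_div_cancel c (NeZero.pos r), Krd_eq_sum_units]
  refine ⟨fun hrd => ?_, fun hrd rb hrb => ?_⟩
  · obtain ⟨p, hp, hpr, hp2⟩ := exists_prime_dvd_sq_dvd_of_not_dvd hsplit hfull
      (dvd_mul_left r c) hrd
    have hpa : ¬ (p : ℤ) ∣ -a := fun h => (Nat.prime_iff_prime_int.mp hp).not_isUnit
      (ha'.isUnit_of_dvd' (dvd_neg.mp h) (Dvd.dvd.mul_left (Int.natCast_dvd_natCast.mpr hpr) c))
    rw [sum_units_stdAddChar_mul_unitsMap_eq_zero hpr hp2 hpa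
      fun v => kloostermanMod (ε * m) c ↑v⁻¹, mul_zero]
  · obtain ⟨cb, hcb⟩ := hrb.dvd
    have hbez : (r : ℤ) * rb + c * cb = 1 := by linarith
    have hcoprime : IsCoprime (-(cb * a)) (r : ℤ) :=
      (IsCoprime.mul_left ⟨(c : ℤ), rb, by linarith⟩ ha'.of_mul_right_right).neg_left
    rw [sum_units_stdAddChar_mul_eq_mul_ramanujanSum hbez _ fun v => kloostermanMod (ε * m) c ↑v⁻¹,
      show (rb : ℂ) * a = ((rb * a : ℤ) : ℂ) by push_cast; ring,
      sum_filter_exp_mul_kloosterman (dvd_refl c), ZMod.unitsMap_self]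
    simp only [mul_neg]
    rw [ramanujanSum_eq_moebius (hsf.squarefree_of_dvd hrd) hcoprime]
    simp only [MonoidHom.id_apply]
    ring

/-- `K_{r,d}(m)` vanishes unless `r` divides the squarefree part `d₀` of `d`,
in which case it is given by the stated twisted sum to modulus `d/r`. -/
theorem stmt16 (a m ε : ℤ) (hε : ε = 1 ∨ ε = -1) (d r d₀ d₁ : ℕ) (hd : 0 < d)
    (ha : Int.gcd a d = 1) (hr : r ∣ d)
    (hsplit : d = d₀ * d₁) (hsf : Squarefree d₀)
    (hfull : ∀ q : ℕ, q.Prime → q ∣ d₁ → q ^ 2 ∣ d₁) (hcop : Nat.Coprime d₀ d₁) :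
    (¬ r ∣ d₀ → Krd a m ε r d = 0) ∧
    (r ∣ d₀ → ∀ rb : ℤ, (r : ℤ) * rb ≡ 1 [ZMOD ((d / r : ℕ) : ℤ)] →
      Krd a m ε r d =
        (((ArithmeticFunction.moebius r : ℤ) : ℂ) / d) *
          ∑ ab ∈ (Finset.range (d / r) ×ˢ Finset.range (d / r)).filter
              (fun ab => ab.1 * ab.2 % (d / r) = 1 % (d / r)),
            Complex.exp (2 * Real.pi * Complex.I *
                (-((rb : ℂ) * a * ab.1) / ((d / r : ℕ) : ℂ))) *
              kloosterman (ε * m) ab.2 (d / r)) :=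
  stmt16_general a m ε d r d₀ d₁ hd ha hr hsplit hsf hfull
end
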